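/- Let D be an open disk in ℂ, A an arc, ζ₀ ∈ A ∩ D, and let l be the line segment from a point ζ₁ ∈ D \ A to ζ₀. If l ∩ A ≠ {ζ₀}, then there is a point p ∈ l ∩ A closest to ζ₁, and p lies on the boundary of the connected component of ζ₁ in D \ A. -/

import Mathlib

/-- `A` is an arc from `p` to `q`. -/
def ArcFrom (p q : ℂ) (A : Set ℂ) : Prop :=
  ∃ f : ℝ → ℂ, ContinuousOn f (Set.Icc 0 1) ∧ Set.InjOn f (Set.Icc 0 1) ∧
    f '' Set.Icc 0 1 = A ∧ f 0 = p ∧ f 1 = q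

/-- `A` is an arc. -/
def IsArc (A : Set ℂ) : Prop := ∃ p q : ℂ, ArcFrom p q A

/-!
Among the compact set `l ∩ A` pick `p` closest to `ζ₁`. The points of `[ζ₁, p]` strictly closer
to `ζ₁` than `p` form a convex set missing `A`, so they lie in the component of `ζ₁` in `D \ A`,
and `p` is in their closure. Since `p ∈ A` is not in that component, it lies on its frontier.
-/

open Metric

theorem IsArc.isCompact {A : Set ℂ} (hA : IsArc A) : IsCompact A := by
  obtain ⟨-, -, f, hf, -, rfl, -⟩ := hA
  exact isCompact_Icc.image_of_continuousOn hf

theorem isCompact_segment {E : Type*} [AddCommGroup E] [Module ℝ E] [TopologicalSpace E]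
    [IsTopologicalAddGroup E] [ContinuousSMul ℝ E] (x y : E) : IsCompact (segment ℝ x y) := by
  rw [segment_eq_image_lineMap]
  exact isCompact_Icc.image AffineMap.lineMap_continuous

theorem mem_frontier_connectedComponentIn_of_mem_closure {X : Type*} [TopologicalSpace X]
    {U S : Set X} {x p : X} (hS : IsPreconnected S) (hxS : x ∈ S) (hSU : S ⊆ U)
    (hpS : p ∈ closure S) (hpU : p ∉ U) : p ∈ frontier (connectedComponentIn U x) :=
  ⟨closure_mono (hS.subset_connectedComponentIn hxS hSU) hpS,
    fun hp => hpU (connectedComponentIn_subset U x (interior_subset hp))⟩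

section NormedSpace

variable {E : Type*} [NormedAddCommGroup E] [NormedSpace ℝ E] {x y : E}

theorem openSegment_subset_ball_dist (hxy : x ≠ y) : openSegment ℝ x y ⊆ ball x (dist x y) := by
  rw [openSegment_eq_image_lineMap]
  rintro _ ⟨t, ht, rfl⟩
  rw [mem_ball, dist_lineMap_left, Real.norm_eq_abs, abs_of_pos ht.1]
  exact mul_lt_of_lt_one_left (dist_pos.2 hxy) ht.2

theorem mem_closure_segment_inter_ball_dist (hxy : x ≠ y) :
    y ∈ closure (segment ℝ x y ∩ ball x (dist x y)) :=
  closure_mono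
    (Set.subset_inter (openSegment_subset_segment ℝ x y) (openSegment_subset_ball_dist hxy))
    ((closure_openSegment (𝕜 := ℝ) x y).symm ▸ right_mem_segment ℝ x y)

theorem mem_frontier_connectedComponentIn_sdiff_of_forall_dist_le {V K : Set E} {p : E}
    (hV : Convex ℝ V) (hx : x ∈ V \ K) (hp : p ∈ V ∩ K)
    (hmin : ∀ y ∈ segment ℝ x p ∩ K, dist x p ≤ dist x y) :
    p ∈ frontier (connectedComponentIn (V \ K) x) := by
  have hxp : x ≠ p := fun h => hx.2 (h ▸ hp.2)
  refine mem_frontier_connectedComponentIn_of_mem_closure (S := segment ℝ x p ∩ ball x (dist x p))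
    ((convex_segment x p).inter (convex_ball x _)).isPreconnected
    ⟨left_mem_segment ℝ x p, mem_ball_self (dist_pos.2 hxp)⟩ ?_
    (mem_closure_segment_inter_ball_dist hxp) fun h => h.2 hp.2
  exact fun y hy => ⟨hV.segment_subset hx.1 hp.1 hy.1,
    fun hyK => (hmin y ⟨hy.1, hyK⟩).not_gt (mem_ball'.1 hy.2)⟩

end NormedSpace

theorem closest_point_on_segment_in_boundary_general (c : ℂ) (r : ℝ)
    (A : Set ℂ) (hA : IsArc A) (ζ₀ ζ₁ : ℂ)
    (hζ₀ : ζ₀ ∈ A ∩ Metric.ball c r) (hζ₁ : ζ₁ ∈ Metric.ball c r \ A) :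
    ∃ p ∈ segment ℝ ζ₁ ζ₀ ∩ A,
      (∀ x ∈ segment ℝ ζ₁ ζ₀ ∩ A, dist ζ₁ p ≤ dist ζ₁ x) ∧
      p ∈ frontier (connectedComponentIn (Metric.ball c r \ A) ζ₁) := by
  obtain ⟨p, hp, hmin⟩ :=
    ((isCompact_segment ζ₁ ζ₀).inter_right hA.isCompact.isClosed).exists_isMinOn
      ⟨ζ₀, right_mem_segment ℝ ζ₁ ζ₀, hζ₀.1⟩ (continuous_const.dist continuous_id).continuousOn
  have hseg : segment ℝ ζ₁ p ⊆ segment ℝ ζ₁ ζ₀ :=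
    (convex_segment ζ₁ ζ₀).segment_subset (left_mem_segment ℝ ζ₁ ζ₀) hp.1
  refine ⟨p, hp, fun x hx => hmin hx, ?_⟩
  exact mem_frontier_connectedComponentIn_sdiff_of_forall_dist_le (convex_ball c r) hζ₁
    ⟨(convex_ball c r).segment_subset hζ₁.1 hζ₀.2 hp.1, hp.2⟩
    fun y hy => hmin ⟨hseg hy.1, hy.2⟩

theorem closest_point_on_segment_in_boundary (c : ℂ) (r : ℝ) (hr : 0 < r)
    (A : Set ℂ) (hA : IsArc A) (ζ₀ ζ₁ : ℂ)
    (hζ₀ : ζ₀ ∈ A ∩ Metric.ball c r) (hζ₁ : ζ₁ ∈ Metric.ball c r \ A)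
    (hne : segment ℝ ζ₁ ζ₀ ∩ A ≠ {ζ₀}) :
    ∃ p ∈ segment ℝ ζ₁ ζ₀ ∩ A,
      (∀ x ∈ segment ℝ ζ₁ ζ₀ ∩ A, dist ζ₁ p ≤ dist ζ₁ x) ∧
      p ∈ frontier (connectedComponentIn (Metric.ball c r \ A) ζ₁) :=
  closest_point_on_segment_in_boundary_general c r A hA ζ₀ ζ₁ hζ₀ hζ₁
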